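/- arXiv:cs/0504047 — 2 statements merged into one kernel-verified Lean document; each statement's English description precedes it below -/
import Mathlib

section
/- Let Σ ⊆ Σ' be finite alphabets and S ∈ Σ^∞. Then dim_FS^{(Σ')}(S) = (log|Σ| / log|Σ'|) · dim_FS^{(Σ)}(S), where dim_FS^{(Σ')}(S) is the finite-state dimension of S considered as a sequence over the larger alphabet Σ'. -/
/-! Write the `s`-gale of a gambler `G` over `A` as `|A| ^ (s |w|) · P_G(w)`, where `P_G(w)`
is the product of the bets `G` placed along `w`. A gambler over `A` is turned into one over
`A'` by playing it on the image of `ι` and betting nothing elsewhere: this keeps `P_G`.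
Conversely a gambler over `A'` is restricted to the image of `ι`, the mass it bets outside
the image being moved to one fixed letter: this can only increase `P_G`. As
`|A'| ^ (c x) = |A| ^ x` for `c = logb |A'| |A|`, a gambler over `A` `s`-succeeds on `S`
exactly when one over `A'` `(c s)`-succeeds on `ι ∘ S`, so the set whose infimum is the
dimension over `A'` is `c` times the one over `A`. -/

open Filter

/-- The prefix of length `n` of the infinite sequence `S`. -/
def pre {α : Type*} (S : ℕ → α) (n : ℕ) : List α := List.ofFn fun i : Fin n => S i

/-- A finite-state gambler over the alphabet `A`: finitely many states, a
transition function, and a rational betting function giving a probability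
measure on `A` at each state. -/
structure FSG (A : Type) [Fintype A] where
  Q : Type
  fin : Finite Q
  q0 : Q
  δ : Q → A → Q
  β : Q → A → ℚ
  β_nonneg : ∀ q a, 0 ≤ β q a
  β_sum : ∀ q, ∑ a : A, β q a = 1

variable {A : Type} [Fintype A]

/-- The state reached after reading the string `w`. -/
def FSG.run (G : FSG A) (w : List A) : G.Q := w.foldl G.δ G.q0

/-- The martingale of the finite-state gambler `G`:
`d_G(λ) = 1` and `d_G(wa) = d_G(w) · β(δ(w))(a) · |A|`. -/
def FSG.mart (G : FSG A) (w : List A) : ℝ :=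
  ∏ i : Fin w.length, ((G.β (G.run (w.take i)) (w.get i) : ℝ) * (Fintype.card A : ℝ))

/-- The `s`-gale of `G`: `d_G^(s)(w) = |A|^((s-1)|w|) · d_G(w)`. -/
noncomputable def FSG.sgale (G : FSG A) (s : ℝ) (w : List A) : ℝ :=
  (Fintype.card A : ℝ) ^ ((s - 1) * (w.length : ℝ)) * G.mart w

/-- `G` `s`-succeeds on `S`: the `s`-gale is unbounded along prefixes of `S`
(equivalently, its limsup is `∞`). -/
def FSG.succeeds (G : FSG A) (s : ℝ) (S : ℕ → A) : Prop :=
  ∀ c : ℝ, ∃ n : ℕ, c < G.sgale s (pre S n)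

/-- The finite-state dimension of `S` over the alphabet `A`. -/
noncomputable def dimFS (S : ℕ → A) : ℝ :=
  sInf {s : ℝ | 0 ≤ s ∧ ∃ G : FSG A, G.succeeds s S}

open scoped Pointwise

lemma pre_comp {α β : Type*} (f : α → β) (S : ℕ → α) (n : ℕ) :
    pre (f ∘ S) n = (pre S n).map f := by
  simp [pre, List.map_ofFn, Function.comp_def]

namespace FSG

def prob (G : FSG A) (w : List A) : ℝ :=
  ∏ i : Fin w.length, (G.β (G.run (w.take i)) (w.get i) : ℝ)

lemma mart_eq_prob_mul (G : FSG A) (w : List A) :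
    G.mart w = G.prob w * (Fintype.card A : ℝ) ^ w.length := by
  simp [mart, prob, Finset.prod_mul_distrib]

lemma sgale_eq_rpow_mul_prob [Nonempty A] (G : FSG A) (s : ℝ) (w : List A) :
    G.sgale s w = (Fintype.card A : ℝ) ^ (s * w.length) * G.prob w := by
  have hk : (Fintype.card A : ℝ) ≠ 0 := by positivity
  rw [sgale, mart_eq_prob_mul, mul_comm (G.prob w), ← mul_assoc, ← Real.rpow_add_natCast hk]
  ring_nf

variable {A' : Type} [Fintype A']

lemma prob_map {B : Type} (G' : FSG A') (ι : B → A') (w : List B) :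
    G'.prob (w.map ι) =
      ∏ i : Fin w.length, (G'.β (G'.run ((w.take i).map ι)) (ι (w.get i)) : ℝ) := by
  rw [prob, ← Fin.prod_congr' _ (List.length_map ι).symm]
  simp [List.map_take]

lemma sum_β_comp_le_one (G' : FSG A') {ι : A → A'} (hι : Function.Injective ι) (q : G'.Q) :
    ∑ a, G'.β q (ι a) ≤ 1 := by
  calc ∑ a, G'.β q (ι a) = ∑ a' ∈ Finset.univ.map ⟨ι, hι⟩, G'.β q a' := by
        rw [Finset.sum_map]; rfl
    _ ≤ ∑ a', G'.β q a' :=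
      Finset.sum_le_sum_of_subset_of_nonneg (Finset.subset_univ _) fun a' _ _ => G'.β_nonneg q a'
    _ = 1 := G'.β_sum q

noncomputable def push [DecidableEq A'] (G : FSG A) (ι : A → A') : FSG A' where
  Q := G.Q
  fin := G.fin
  q0 := G.q0
  δ q := Function.extend ι (G.δ q) fun _ => q
  β q a' := ∑ a ∈ Finset.univ.filter (ι · = a'), G.β q a
  β_nonneg q a' := Finset.sum_nonneg fun a _ => G.β_nonneg q a
  β_sum q := by
    rw [Finset.sum_fiberwise_of_maps_to (fun a _ => Finset.mem_univ (ι a)) (G.β q)]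
    exact G.β_sum q

def pull [DecidableEq A] (G' : FSG A') {ι : A → A'} (hι : Function.Injective ι) (a₀ : A) :
    FSG A where
  Q := G'.Q
  fin := G'.fin
  q0 := G'.q0
  δ q a := G'.δ q (ι a)
  β q a := G'.β q (ι a) + if a = a₀ then 1 - ∑ b, G'.β q (ι b) else 0
  β_nonneg q a := by
    have := G'.sum_β_comp_le_one hι q
    have := G'.β_nonneg q (ι a)
    split_ifs <;> linarith
  β_sum q := by
    rw [Finset.sum_add_distrib, Finset.sum_ite_eq']
    simp

section push
variable [DecidableEq A'] {ι : A → A'} (hι : Function.Injective ι) (G : FSG A)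
include hι

lemma push_run (w : List A) : (G.push ι).run (w.map ι) = G.run w := by
  simp only [run, List.foldl_map, push, hι.extend_apply]

lemma push_β (q : G.Q) (a : A) : (G.push ι).β q (ι a) = G.β q a := by
  have : Finset.univ.filter (ι · = ι a) = {a} := by ext; simp [hι.eq_iff]
  simp only [push, this, Finset.sum_singleton]

lemma prob_push (w : List A) : (G.push ι).prob (w.map ι) = G.prob w := by
  rw [prob_map]
  simp only [push_run hι, push_β hι]
  rfl

end push

section pull
variable [DecidableEq A] (G' : FSG A') {ι : A → A'} (hι : Function.Injective ι) (a₀ : A)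

lemma pull_run (w : List A) : (G'.pull hι a₀).run w = G'.run (w.map ι) := by
  simp only [run, List.foldl_map]
  rfl

lemma β_le_pull_β (q : G'.Q) (a : A) : G'.β q (ι a) ≤ (G'.pull hι a₀).β q a := by
  have := G'.sum_β_comp_le_one hι q
  refine le_add_of_nonneg_right ?_
  split_ifs <;> linarith

lemma prob_map_le_prob_pull (w : List A) : G'.prob (w.map ι) ≤ (G'.pull hι a₀).prob w := by
  rw [prob_map, prob]
  refine Finset.prod_le_prod (fun i _ => by exact_mod_cast G'.β_nonneg _ _) fun i _ => ?_
  rw [pull_run]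
  exact_mod_cast G'.β_le_pull_β hι a₀ _ _

end pull

end FSG

section rescaling
variable {A' : Type} [Fintype A'] (hA' : 1 < Fintype.card A')
include hA'

lemma card_rpow_logb_mul [Nonempty A] (x : ℝ) :
    (Fintype.card A' : ℝ) ^ (Real.logb (Fintype.card A') (Fintype.card A) * x) =
      (Fintype.card A : ℝ) ^ x := by
  have hA'1 : (1 : ℝ) < Fintype.card A' := by exact_mod_cast hA'
  rw [Real.rpow_mul (by positivity),
    Real.rpow_logb (by positivity) hA'1.ne' (by exact_mod_cast Fintype.card_pos)]

lemma FSG.sgale_push [Nonempty A] [DecidableEq A'] {ι : A → A'} (hι : Function.Injective ι)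
    (G : FSG A) (s : ℝ) (w : List A) :
    (G.push ι).sgale (Real.logb (Fintype.card A') (Fintype.card A) * s) (w.map ι) =
      G.sgale s w := by
  have : Nonempty A' := ⟨ι (Classical.arbitrary A)⟩
  rw [FSG.sgale_eq_rpow_mul_prob, FSG.sgale_eq_rpow_mul_prob, List.length_map, mul_assoc,
    card_rpow_logb_mul hA', FSG.prob_push hι]

lemma FSG.sgale_map_le_sgale_pull [DecidableEq A] (G' : FSG A') {ι : A → A'}
    (hι : Function.Injective ι) (a₀ : A) (s : ℝ) (w : List A) :
    G'.sgale (Real.logb (Fintype.card A') (Fintype.card A) * s) (w.map ι) ≤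
      (G'.pull hι a₀).sgale s w := by
  have : Nonempty A := ⟨a₀⟩
  have : Nonempty A' := ⟨ι a₀⟩
  rw [FSG.sgale_eq_rpow_mul_prob, FSG.sgale_eq_rpow_mul_prob, List.length_map, mul_assoc,
    card_rpow_logb_mul hA']
  exact mul_le_mul_of_nonneg_left (G'.prob_map_le_prob_pull hι a₀ w) (by positivity)

end rescaling

lemma exists_succeeds_comp_iff {A' : Type} [Fintype A'] (hA' : 1 < Fintype.card A')
    {ι : A → A'} (hι : Function.Injective ι) (S : ℕ → A) (s : ℝ) :
    (∃ G' : FSG A', G'.succeeds (Real.logb (Fintype.card A') (Fintype.card A) * s) (ι ∘ S)) ↔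
      ∃ G : FSG A, G.succeeds s S := by
  classical
  have : Nonempty A := ⟨S 0⟩
  constructor
  · rintro ⟨G', hG'⟩
    refine ⟨G'.pull hι (S 0), fun c => ?_⟩
    obtain ⟨n, hn⟩ := hG' c
    rw [pre_comp] at hn
    exact ⟨n, hn.trans_le (G'.sgale_map_le_sgale_pull hA' hι (S 0) s (pre S n))⟩
  · rintro ⟨G, hG⟩
    refine ⟨G.push ι, fun c => ?_⟩
    obtain ⟨n, hn⟩ := hG c
    exact ⟨n, by rwa [pre_comp, G.sgale_push hA' hι]⟩

theorem dimFS_alphabet_change {A A' : Type} [Fintype A] [Fintype A']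
    (hA : 2 ≤ Fintype.card A) (ι : A → A') (hι : Function.Injective ι)
    (S : ℕ → A) :
    dimFS (ι ∘ S) = Real.log (Fintype.card A) / Real.log (Fintype.card A') * dimFS S := by
  have hA' : 1 < Fintype.card A' := by
    have := Fintype.card_le_of_injective ι hι
    omega
  set c := Real.logb (Fintype.card A') (Fintype.card A)
  have hc : 0 < c := Real.logb_pos (by exact_mod_cast hA') (by exact_mod_cast hA)
  have hset : {s' : ℝ | 0 ≤ s' ∧ ∃ G' : FSG A', G'.succeeds s' (ι ∘ S)} =
      c • {s : ℝ | 0 ≤ s ∧ ∃ G : FSG A, G.succeeds s S} := by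
    ext s'
    rw [Set.mem_smul_set_iff_inv_smul_mem₀ hc.ne', Set.mem_ofPred_eq, Set.mem_ofPred_eq,
      smul_eq_mul, ← exists_succeeds_comp_iff hA' hι, mul_inv_cancel_left₀ hc.ne',
      mul_nonneg_iff_of_pos_left (inv_pos.2 hc)]
  rw [dimFS, dimFS, hset, Real.sInf_smul_of_nonneg hc.le, smul_eq_mul, Real.log_div_log]
end

section
/- Let S ∈ Σ^∞ and let S' be obtained from S by inserting marker characters m ∉ Σ at positions with nondecreasing unbounded gaps. Then for every positive integer l, the l-th normalized block entropy satisfies H_l(S') = H_l(S), where in H_l(S) the sequence S is regarded as a sequence over the enlarged alphabet Σ_m = Σ ∪ {m}. Consequently H(S') = H(S). -/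
open Filter

/-- The number of (possibly overlapping) occurrences of `w` as a substring of `x`. -/
def occ {α : Type*} [DecidableEq α] (w x : List α) : ℕ :=
  ((List.range x.length).filter fun i => (x.drop i).take w.length = w).length

/-- The finite substring `S[a+1..b]` (0-indexed: characters `S a, ..., S (b-1)`). -/
def seg {α : Type*} (S : ℕ → α) (a b : ℕ) : List α :=
  (List.range (b - a)).map fun j => S (a + j)

/-- Prefix of the marked sequence `S'` after the `j`-th marker. -/
def markPre {α : Type*} (S : ℕ → α) (i : ℕ → ℕ) : ℕ → List (Option α)
  | 0 => []
  | j + 1 => markPre S i j ++ (seg S (i j) (i (j + 1))).map some ++ [none]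

/-- `freqn w x = #(w,x) / (|x| - |w| + 1)`, the frequency of `w` in `x`. -/
noncomputable def freqn {Γ : Type*} [DecidableEq Γ] (w x : List Γ) : ℝ :=
  (occ w x : ℝ) / ((x.length : ℝ) - (w.length : ℝ) + 1)

/-- The `l`-th normalized block entropy of the sequence `T` over alphabet `Γ`:
`H_l(T) = (1/(l log|Γ|)) liminf_n ∑_{w ∈ Γ^l} freq(w,T[1..n]) log(1/freq(w,T[1..n]))`. -/
noncomputable def Hl {Γ : Type*} [Fintype Γ] [DecidableEq Γ] (T : ℕ → Γ) (l : ℕ) : ℝ :=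
  ((l : ℝ) * Real.log (Fintype.card Γ))⁻¹ *
    liminf (fun n : ℕ =>
      ∑ v : Fin l → Γ, Real.negMulLog (freqn (List.ofFn v) (pre T n))) atTop

open Topology Uniformity Real

/-!
Let `k_m` be the number of markers among the first `m` characters of `S'`. That prefix is
`S[0, m - k_m)` with `k_m` markers inserted, and each insertion changes the number of occurrences
of a block of length `l` by at most `2l`; since nondecreasing unbounded gaps force `k_m = o(m)`,
the block frequencies of `S'[0, m)` and of `S[0, m - k_m)` are asymptotically equal, and by
uniform continuity of `x ↦ -x log x` on `[0, 1]` so are the block entropy sums. Finally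
`m ↦ m - k_m` is monotone and onto `ℕ`, so reindexing along it does not change the `liminf`.
-/

section Occurrences

variable {Γ : Type*} {w : List Γ}

lemma add_length_le_of_take_drop_eq (hw : 0 < w.length) {x : List Γ} {i : ℕ}
    (h : (x.drop i).take w.length = w) : i + w.length ≤ x.length := by
  have := congrArg List.length h
  simp only [List.length_take, List.length_drop] at this
  omega

lemma take_drop_append_of_add_le {a : List Γ} (b : List Γ) {i : ℕ}
    (h : i + w.length ≤ a.length) :
    ((a ++ b).drop i).take w.length = (a.drop i).take w.length := by
  rw [List.drop_append_of_le_length (by omega), List.take_append_of_le_length]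
  rw [List.length_drop]
  omega

lemma take_drop_append_length_add (a b : List Γ) (i : ℕ) :
    ((a ++ b).drop (a.length + i)).take w.length = (b.drop i).take w.length := by
  rw [← List.drop_drop, List.drop_left]

variable [DecidableEq Γ]

def occPositions (w x : List Γ) : Finset ℕ :=
  (Finset.range x.length).filter fun i => (x.drop i).take w.length = w

lemma occ_eq_card_occPositions (w x : List Γ) : occ w x = (occPositions w x).card := rfl

lemma mem_occPositions {x : List Γ} {i : ℕ} :
    i ∈ occPositions w x ↔ i < x.length ∧ (x.drop i).take w.length = w := by
  simp [occPositions]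

lemma occ_le_length (w x : List Γ) : occ w x ≤ x.length :=
  List.length_filter_le _ _ |>.trans_eq List.length_range

lemma occPositions_subset_range (hw : 0 < w.length) (x : List Γ) :
    occPositions w x ⊆ Finset.range (x.length + 1 - w.length) := fun i hi => by
  have := add_length_le_of_take_drop_eq hw (mem_occPositions.1 hi).2
  simp only [Finset.mem_range]
  omega

lemma occ_add_length_le (hw : 0 < w.length) {x : List Γ} (h : w.length ≤ x.length) :
    occ w x + w.length ≤ x.length + 1 := by
  have := Finset.card_le_card (occPositions_subset_range hw x)
  rw [Finset.card_range] at this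
  rw [occ_eq_card_occPositions]
  omega

lemma occ_eq_zero_of_length_lt (hw : 0 < w.length) {x : List Γ} (h : x.length < w.length) :
    occ w x = 0 := by
  have := Finset.card_le_card (occPositions_subset_range hw x)
  rw [Finset.card_range] at this
  rw [occ_eq_card_occPositions]
  omega

lemma occPositions_append_subset (hw : 0 < w.length) (a b : List Γ) :
    occPositions w (a ++ b) ⊆
      (occPositions w a ∪ (occPositions w b).map (addLeftEmbedding a.length)) ∪
        Finset.Ico (a.length + 1 - w.length) a.length := by
  intro i hi
  obtain ⟨hi, hwin⟩ := mem_occPositions.1 hi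
  rw [List.length_append] at hi
  simp only [Finset.mem_union, Finset.mem_map, addLeftEmbedding_apply, Finset.mem_Ico,
    mem_occPositions]
  by_cases hleft : i + w.length ≤ a.length
  · exact .inl (.inl ⟨by omega, by rwa [← take_drop_append_of_add_le b hleft]⟩)
  by_cases hright : a.length ≤ i
  · refine .inl (.inr ⟨i - a.length, ⟨by omega, ?_⟩, by omega⟩)
    rwa [← take_drop_append_length_add, Nat.add_sub_cancel' hright]
  · exact .inr (by omega)

lemma occ_append_le (hw : 0 < w.length) (a b : List Γ) :
    occ w (a ++ b) ≤ occ w a + occ w b + (w.length - 1) := by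
  simp only [occ_eq_card_occPositions]
  calc _ ≤ _ := Finset.card_le_card (occPositions_append_subset hw a b)
    _ ≤ _ := (Finset.card_union_le _ _).trans (add_le_add (Finset.card_union_le _ _) le_rfl)
    _ ≤ _ := by simp only [Finset.card_map, Nat.card_Ico]; omega

lemma occ_add_occ_le_occ_append (hw : 0 < w.length) (a b : List Γ) :
    occ w a + occ w b ≤ occ w (a ++ b) := by
  simp only [occ_eq_card_occPositions]
  have hdisj :
      Disjoint (occPositions w a) ((occPositions w b).map (addLeftEmbedding a.length)) := by
    refine Finset.disjoint_left.2 fun i hi hi' => ?_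
    have := add_length_le_of_take_drop_eq hw (mem_occPositions.1 hi).2
    obtain ⟨j, -, rfl⟩ := Finset.mem_map.1 hi'
    simp only [addLeftEmbedding_apply] at this
    omega
  rw [← Finset.card_map (addLeftEmbedding a.length) (s := occPositions w b),
    ← Finset.card_union_of_disjoint hdisj]
  refine Finset.card_le_card fun i hi => ?_
  simp only [Finset.mem_union, Finset.mem_map, addLeftEmbedding_apply, mem_occPositions] at hi ⊢
  rcases hi with ⟨hi, hwin⟩ | ⟨j, ⟨hj, hwin⟩, rfl⟩
  · have := add_length_le_of_take_drop_eq hw hwin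
    exact ⟨by simp only [List.length_append]; omega, by rwa [take_drop_append_of_add_le b this]⟩
  · exact ⟨by simp only [List.length_append]; omega, by rwa [take_drop_append_length_add]⟩

lemma abs_occ_append_sub_occ_append_le (hw : 0 < w.length) (x y z : List Γ) :
    |(occ w (x ++ z) : ℤ) - occ w (y ++ z)| ≤ |(occ w x : ℤ) - occ w y| + w.length := by
  have := occ_append_le hw x z
  have := occ_append_le hw y z
  have := occ_add_occ_le_occ_append hw x z
  have := occ_add_occ_le_occ_append hw y z
  have := le_abs_self ((occ w x : ℤ) - occ w y)
  have := neg_abs_le ((occ w x : ℤ) - occ w y)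
  rw [abs_le]
  omega

lemma abs_occ_append_singleton_sub_le (hw : 0 < w.length) (x : List Γ) (c : Γ) :
    |(occ w (x ++ [c]) : ℤ) - occ w x| ≤ w.length := by
  have := occ_append_le hw x [c]
  have := occ_add_occ_le_occ_append hw x [c]
  have : occ w [c] ≤ 1 := occ_le_length w [c]
  rw [abs_le]
  omega

end Occurrences

section Prefixes

variable {α β : Type*}

lemma pre_eq_map_range (S : ℕ → α) (n : ℕ) : pre S n = (List.range n).map S :=
  List.ext_getElem (by simp [pre]) (by simp [pre])

@[simp]
lemma length_pre (S : ℕ → α) (n : ℕ) : (pre S n).length = n := by simp [pre]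

@[simp]
lemma length_seg (S : ℕ → α) (a b : ℕ) : (seg S a b).length = b - a := by simp [seg]

lemma pre_eq_pre_append_seg (S : ℕ → α) {a b : ℕ} (h : a ≤ b) :
    pre S b = pre S a ++ seg S a b := by
  obtain ⟨t, rfl⟩ := Nat.exists_eq_add_of_le h
  simp [pre_eq_map_range, seg, List.range_add]

lemma take_pre (S : ℕ → α) {m n : ℕ} (h : m ≤ n) : (pre S n).take m = pre S m := by
  simp [pre_eq_map_range, ← List.map_take, List.take_range, min_eq_left h]

lemma take_seg (S : ℕ → α) {a b t : ℕ} (h : a + t ≤ b) :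
    (seg S a b).take t = seg S a (a + t) := by
  simp [seg, ← List.map_take, List.take_range, min_eq_left (Nat.le_sub_of_add_le' h)]

lemma map_seg (f : α → β) (S : ℕ → α) (a b : ℕ) :
    (seg S a b).map f = seg (fun n => f (S n)) a b := by
  simp [seg]

end Prefixes

section Frequencies

variable {Γ : Type*} [DecidableEq Γ] {w : List Γ}

lemma freqn_mem_Icc (hw : 0 < w.length) (x : List Γ) : freqn w x ∈ Set.Icc (0 : ℝ) 1 := by
  rcases lt_or_ge x.length w.length with h | h
  · simp [freqn, occ_eq_zero_of_length_lt hw h]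
  · have hocc : (occ w x : ℝ) + w.length ≤ x.length + 1 := by
      exact_mod_cast occ_add_length_le hw h
    have hden : (w.length : ℝ) ≤ x.length := by exact_mod_cast h
    exact ⟨div_nonneg (Nat.cast_nonneg _) (by linarith),
      (div_le_one (by linarith)).2 (by linarith)⟩

lemma abs_freqn_sub_freqn_le (hw : 0 < w.length) {x y : List Γ} (hwy : w.length ≤ y.length)
    (hyx : y.length ≤ x.length) {Δ : ℝ} (hΔ : |(occ w x : ℝ) - occ w y| ≤ Δ) :
    |freqn w x - freqn w y| ≤
      (Δ + ((x.length : ℝ) - y.length)) / ((x.length : ℝ) - w.length + 1) := by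
  set d : ℝ := (y.length : ℝ) - w.length + 1
  set J : ℝ := (x.length : ℝ) - y.length
  have hd : 0 < d := by
    have : (w.length : ℝ) ≤ y.length := by exact_mod_cast hwy
    linarith
  have hJ : 0 ≤ J := by
    have : (y.length : ℝ) ≤ x.length := by exact_mod_cast hyx
    linarith
  have hdJ : (x.length : ℝ) - w.length + 1 = d + J := by ring
  have hfy : freqn w y ∈ Set.Icc (0 : ℝ) 1 := freqn_mem_Icc hw y
  have hsplit : freqn w x - freqn w y =
      ((occ w x : ℝ) - occ w y) / (d + J) - freqn w y * (J / (d + J)) := by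
    simp only [freqn, hdJ]
    change _ / (d + J) - _ / d = _ / (d + J) - _ / d * (J / (d + J))
    field_simp
    ring
  rw [hsplit, hdJ, add_div]
  refine (abs_sub _ _).trans (add_le_add ?_ ?_)
  · rw [abs_div, abs_of_pos (show 0 < d + J by linarith)]
    gcongr
  · rw [abs_of_nonneg (mul_nonneg hfy.1 (by positivity))]
    exact mul_le_of_le_one_left (by positivity) hfy.2

end Frequencies

section Analysis

lemma UniformContinuousOn.tendsto_uniformity_comp {α β ι : Type*} [UniformSpace α]
    [UniformSpace β] {f : α → β} {s : Set α} (hf : UniformContinuousOn f s) {l : Filter ι}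
    {x y : ι → α} (hx : ∀ n, x n ∈ s) (hy : ∀ n, y n ∈ s)
    (h : Tendsto (fun n => (x n, y n)) l (𝓤 α)) :
    Tendsto (fun n => (f (x n), f (y n))) l (𝓤 β) :=
  Tendsto.comp hf <| tendsto_inf.2
    ⟨h, tendsto_principal.2 (Eventually.of_forall fun n => Set.mk_mem_prod (hx n) (hy n))⟩

lemma tendsto_negMulLog_sub_negMulLog {ι : Type*} {l : Filter ι} {x y : ι → ℝ}
    (hx : ∀ n, x n ∈ Set.Icc (0 : ℝ) 1) (hy : ∀ n, y n ∈ Set.Icc (0 : ℝ) 1)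
    (h : Tendsto (fun n => x n - y n) l (𝓝 0)) :
    Tendsto (fun n => negMulLog (x n) - negMulLog (y n)) l (𝓝 0) := by
  have huc : UniformContinuousOn negMulLog (Set.Icc 0 1) :=
    isCompact_Icc.uniformContinuousOn_of_continuous continuous_negMulLog.continuousOn
  rw [tendsto_iff_norm_sub_tendsto_zero] at h ⊢
  simp only [sub_zero, ← dist_eq_norm] at h ⊢
  exact tendsto_uniformity_iff_dist_tendsto_zero.1
    (huc.tendsto_uniformity_comp hx hy (tendsto_uniformity_iff_dist_tendsto_zero.2 h))

lemma liminf_eq_liminf_of_tendsto_sub {ι : Type*} {l : Filter ι} [l.NeBot] {u v : ι → ℝ}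
    (hv : IsBoundedUnder (· ≤ ·) l v) (hv' : IsBoundedUnder (· ≥ ·) l v)
    (h : Tendsto (u - v) l (𝓝 0)) : liminf u l = liminf v l := by
  have hcob : IsCoboundedUnder (· ≥ ·) l v := hv.isCoboundedUnder_ge
  have hu : u = (u - v) + v := (sub_add_cancel u v).symm
  apply le_antisymm
  · calc liminf u l = liminf ((u - v) + v) l := by rw [← hu]
      _ ≤ limsup (u - v) l + liminf v l :=
        liminf_add_le h.isBoundedUnder_ge h.isBoundedUnder_le hv' hcob
      _ = liminf v l := by rw [h.limsup_eq, zero_add]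
  · calc liminf v l = liminf (u - v) l + liminf v l := by rw [h.liminf_eq, zero_add]
      _ ≤ liminf ((u - v) + v) l :=
        le_liminf_add h.isBoundedUnder_ge h.isBoundedUnder_le hv' hcob
      _ = liminf u l := by rw [← hu]

lemma map_atTop_eq_of_monotone_of_surjective {α β : Type*} [LinearOrder α] [Nonempty α]
    [LinearOrder β] {f : α → β} (hf : Monotone f) (hsurj : Function.Surjective f) :
    map f atTop = atTop := by
  have : Nonempty β := .map f ‹_›
  refine le_antisymm (hf.tendsto_atTop_atTop fun b => (hsurj b).imp fun _ h => h.ge) ?_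
  intro s hs
  obtain ⟨N, hN⟩ := mem_atTop_sets.1 (mem_map.1 hs)
  refine mem_atTop_sets.2 ⟨f N, fun b hb => ?_⟩
  obtain ⟨a, rfl⟩ := hsurj b
  rcases le_total N a with h | h
  · exact hN a h
  · rw [le_antisymm (hf h) hb]
    exact hN N le_rfl

lemma Nat.surjective_of_le_add_one {f : ℕ → ℕ} (h0 : f 0 = 0)
    (hstep : ∀ n, f (n + 1) ≤ f n + 1)
    (hunb : ∀ k, ∃ n, k ≤ f n) : Function.Surjective f := by
  intro k
  obtain ⟨n, hn⟩ := hunb k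
  induction n with
  | zero => exact ⟨0, by omega⟩
  | succ n ih =>
    rcases le_or_gt k (f n) with h | h
    · exact ih h
    · exact ⟨n + 1, by have := hstep n; omega⟩

end Analysis

section BlockEntropy

variable {Γ : Type*} [Fintype Γ] [DecidableEq Γ] {l : ℕ}

noncomputable def blockEntropySum (T : ℕ → Γ) (l n : ℕ) : ℝ :=
  ∑ v : Fin l → Γ, negMulLog (freqn (List.ofFn v) (pre T n))

lemma Hl_eq_liminf_blockEntropySum (T : ℕ → Γ) (l : ℕ) :
    Hl T l = ((l : ℝ) * Real.log (Fintype.card Γ))⁻¹ * liminf (blockEntropySum T l) atTop :=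
  rfl

lemma blockEntropySum_mem_Icc (hl : 0 < l) (T : ℕ → Γ) (n : ℕ) :
    blockEntropySum T l n ∈ Set.Icc (0 : ℝ) (Fintype.card (Fin l → Γ)) := by
  have hfreq (v : Fin l → Γ) := freqn_mem_Icc (by simpa using hl) (pre T n) (w := List.ofFn v)
  constructor
  · exact Finset.sum_nonneg fun v _ => negMulLog_nonneg (hfreq v).1 (hfreq v).2
  · calc blockEntropySum T l n ≤ ∑ _v : Fin l → Γ, (1 : ℝ) :=
          Finset.sum_le_sum fun v _ => by
            linarith [negMulLog_le_one_sub_self (hfreq v).1, (hfreq v).1]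
      _ = Fintype.card (Fin l → Γ) := by simp

lemma tendsto_blockEntropySum_sub (hl : 0 < l) {T T' : ℕ → Γ} {φ : ℕ → ℕ}
    (h : ∀ v : Fin l → Γ, Tendsto (fun m =>
      freqn (List.ofFn v) (pre T' m) - freqn (List.ofFn v) (pre T (φ m))) atTop (𝓝 0)) :
    Tendsto (fun m => blockEntropySum T' l m - blockEntropySum T l (φ m)) atTop (𝓝 0) := by
  have hw (v : Fin l → Γ) : 0 < (List.ofFn v).length := by simpa using hl
  simp only [blockEntropySum, ← Finset.sum_sub_distrib]
  simpa using tendsto_finsetSum Finset.univ fun v _ => tendsto_negMulLog_sub_negMulLog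
    (fun m => freqn_mem_Icc (hw v) _) (fun m => freqn_mem_Icc (hw v) _) (h v)

lemma liminf_blockEntropySum_eq_of_tendsto_sub (hl : 0 < l) {T T' : ℕ → Γ} {φ : ℕ → ℕ}
    (hφ : map φ atTop = atTop)
    (h : ∀ v : Fin l → Γ, Tendsto (fun m =>
      freqn (List.ofFn v) (pre T' m) - freqn (List.ofFn v) (pre T (φ m))) atTop (𝓝 0)) :
    liminf (blockEntropySum T' l) atTop = liminf (blockEntropySum T l) atTop := by
  have hbdd := blockEntropySum_mem_Icc hl T
  calc liminf (blockEntropySum T' l) atTop = liminf (blockEntropySum T l ∘ φ) atTop :=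
        liminf_eq_liminf_of_tendsto_sub (isBoundedUnder_of ⟨_, fun m => (hbdd (φ m)).2⟩)
          (isBoundedUnder_of ⟨_, fun m => (hbdd (φ m)).1⟩) (tendsto_blockEntropySum_sub hl h)
    _ = liminf (blockEntropySum T l) atTop := by rw [liminf_comp, hφ]

end BlockEntropy

section Markers

variable {α : Type*} {S : ℕ → α} {i : ℕ → ℕ}

/-- The number of markers among the first `m` characters of the marked sequence; the `j`-th
marker ends `markPre S i j`, which has length `i j + j`. -/
def markerCount (i : ℕ → ℕ) (m : ℕ) : ℕ := Nat.findGreatest (fun j => i j + j ≤ m) m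

lemma markerCount_le_self (m : ℕ) : markerCount i m ≤ m := Nat.findGreatest_le m

lemma markerCount_spec (hi0 : i 0 = 0) (m : ℕ) : i (markerCount i m) + markerCount i m ≤ m :=
  Nat.findGreatest_spec (P := fun j => i j + j ≤ m) (Nat.zero_le m) (by simp [hi0])

lemma lt_markerCount_add_one (hmono : StrictMono i) (m : ℕ) :
    m < i (markerCount i m + 1) + (markerCount i m + 1) := by
  by_contra! h
  have := Nat.le_findGreatest (P := fun j => i j + j ≤ m) (n := m)
    (by have := hmono.le_apply (x := markerCount i m + 1); omega) h
  exact (markerCount i m).lt_succ_self.not_ge this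

lemma two_mul_markerCount_le (hi0 : i 0 = 0) (hmono : StrictMono i) (m : ℕ) :
    2 * markerCount i m ≤ m := by
  have := markerCount_spec hi0 m
  have := hmono.le_apply (x := markerCount i m)
  omega

lemma markerCount_mono : Monotone (markerCount i) :=
  monotone_nat_of_le_succ fun _ => Nat.findGreatest_mono (fun _ h => by omega) (by omega)

lemma markerCount_succ_le (hi0 : i 0 = 0) (hmono : StrictMono i) (m : ℕ) :
    markerCount i (m + 1) ≤ markerCount i m + 1 := by
  by_contra! h
  have := markerCount_spec hi0 (m + 1)
  have := lt_markerCount_add_one hmono m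
  have := hmono h
  omega

lemma length_markPre (hi0 : i 0 = 0) (hmono : StrictMono i) :
    ∀ j, (markPre S i j).length = i j + j
  | 0 => by simp [markPre, hi0]
  | j + 1 => by
    have := hmono.monotone (Nat.le_add_right j 1)
    simp only [markPre, List.length_append, length_markPre hi0 hmono j, List.length_map,
      length_seg, List.length_singleton]
    omega

lemma pre_eq_markPre_append {S' : ℕ → Option α} (hi0 : i 0 = 0) (hmono : StrictMono i)
    (hS' : ∀ j, pre S' (i j + j) = markPre S i j) (m : ℕ) :
    pre S' m = markPre S i (markerCount i m) ++
      (seg S (i (markerCount i m)) (m - markerCount i m)).map some := by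
  have hjm := markerCount_spec hi0 m
  have hmj := lt_markerCount_add_one hmono m
  set j := markerCount i m
  have hij := hmono.monotone (Nat.le_add_right j 1)
  have hlen := length_markPre (S := S) hi0 hmono j
  rw [← take_pre S' hmj.le, hS' (j + 1), markPre,
    List.take_append_of_le_length
      (by simp only [List.length_append, hlen, List.length_map, length_seg]; omega),
    List.take_append,
    List.take_of_length_le (by omega), hlen, ← List.map_take,
    take_seg S (t := m - (i j + j)) (by omega), show i j + (m - (i j + j)) = m - j by omega]

lemma map_sub_markerCount_atTop (hi0 : i 0 = 0) (hmono : StrictMono i) :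
    map (fun m => m - markerCount i m) atTop = atTop := by
  have hle := markerCount_le_self (i := i)
  have hsucc := markerCount_succ_le hi0 hmono
  have hmono' (m : ℕ) := markerCount_mono (i := i) (Nat.le_add_right m 1)
  refine map_atTop_eq_of_monotone_of_surjective
    (monotone_nat_of_le_succ fun m => by have := hsucc m; omega)
    (Nat.surjective_of_le_add_one (by have := hle 0; omega)
      (fun m => by have := hmono' m; have := hle m; omega)
      fun k => ⟨2 * k, by have := two_mul_markerCount_le hi0 hmono (2 * k); omega⟩)

end Markers

section OccurrenceComparison

variable {α : Type*} [DecidableEq α] {S : ℕ → α} {i : ℕ → ℕ} {w : List (Option α)}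

lemma abs_occ_markPre_sub_le (hw : 0 < w.length) (hi0 : i 0 = 0) (hmono : StrictMono i) :
    ∀ j, |(occ w (markPre S i j) : ℤ) - occ w (pre (fun n => some (S n)) (i j))| ≤
      2 * w.length * j
  | 0 => by simp [markPre, pre, hi0]
  | j + 1 => by
    set X := markPre S i j ++ (seg S (i j) (i (j + 1))).map some
    have hX := abs_occ_append_singleton_sub_le hw X none
    have hB := abs_occ_append_sub_occ_append_le hw (markPre S i j)
      (pre (fun n => some (S n)) (i j)) (seg (fun n => some (S n)) (i j) (i (j + 1)))
    have ih := abs_occ_markPre_sub_le hw hi0 hmono j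
    rw [← pre_eq_pre_append_seg _ (hmono.monotone (Nat.le_add_right j 1)), ← map_seg] at hB
    calc _ ≤ |(occ w (X ++ [none]) : ℤ) - occ w X| +
          |(occ w X : ℤ) - occ w (pre (fun n => some (S n)) (i (j + 1)))| := abs_sub_le _ _ _
      _ ≤ _ := by push_cast; linarith

lemma abs_occ_pre_sub_le {S' : ℕ → Option α} (hw : 0 < w.length) (hi0 : i 0 = 0)
    (hmono : StrictMono i) (hS' : ∀ j, pre S' (i j + j) = markPre S i j) (m : ℕ) :
    |(occ w (pre S' m) : ℤ) - occ w (pre (fun n => some (S n)) (m - markerCount i m))| ≤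
      2 * w.length * (markerCount i m + 1) := by
  have hB := abs_occ_append_sub_occ_append_le hw (markPre S i (markerCount i m))
    (pre (fun n => some (S n)) (i (markerCount i m)))
    (seg (fun n => some (S n)) (i (markerCount i m)) (m - markerCount i m))
  have := markerCount_spec hi0 m
  rw [← pre_eq_pre_append_seg _ (by omega), ← map_seg,
    ← pre_eq_markPre_append hi0 hmono hS'] at hB
  have := abs_occ_markPre_sub_le (S := S) hw hi0 hmono (markerCount i m)
  linarith

end OccurrenceComparison

section Growth

variable {i : ℕ → ℕ}

lemma markerCount_linear_bound (hi0 : i 0 = 0) (hmono : StrictMono i)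
    (hgap : ∀ j, i (j + 1) - i j ≤ i (j + 2) - i (j + 1))
    (hunb : ∀ M : ℕ, ∃ j, M < i (j + 1) - i j) (K : ℕ) :
    ∃ C, ∀ m, (K + 1) * (markerCount i m + 1) ≤ m + C := by
  obtain ⟨j₀, hj₀⟩ := hunb K
  have hgap_mono : Monotone fun j => i (j + 1) - i j := monotone_nat_of_le_succ hgap
  have hgrowth : ∀ t, i j₀ + t * (K + 1) ≤ i (j₀ + t) := by
    intro t
    induction t with
    | zero => simp
    | succ t ih =>
      have : K < i (j₀ + t + 1) - i (j₀ + t) :=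
        hj₀.trans_le (hgap_mono (Nat.le_add_right j₀ t))
      have := hmono.monotone (Nat.le_add_right (j₀ + t) 1)
      rw [← add_assoc, add_one_mul]
      omega
  refine ⟨(K + 1) * (j₀ + 1), fun m => ?_⟩
  have hspec := markerCount_spec hi0 m
  rcases le_or_gt (markerCount i m) j₀ with hle | hgt
  · nlinarith
  · obtain ⟨t, ht⟩ := Nat.exists_eq_add_of_le hgt.le
    have := hgrowth t
    rw [ht] at hspec ⊢
    nlinarith

lemma tendsto_markerCount_add_one_div (hi0 : i 0 = 0) (hmono : StrictMono i)
    (hgap : ∀ j, i (j + 1) - i j ≤ i (j + 2) - i (j + 1))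
    (hunb : ∀ M : ℕ, ∃ j, M < i (j + 1) - i j) :
    Tendsto (fun m : ℕ => ((markerCount i m : ℝ) + 1) / m) atTop (𝓝 0) := by
  rw [Metric.tendsto_atTop]
  intro ε hε
  obtain ⟨K, hK⟩ := exists_nat_gt (2 / ε)
  obtain ⟨C, hC⟩ := markerCount_linear_bound hi0 hmono hgap hunb K
  refine ⟨C + 1, fun m hm => ?_⟩
  have hm0 : (0 : ℝ) < m := by exact_mod_cast (show 0 < m by omega)
  have hKm : ((K : ℝ) + 1) * ((markerCount i m : ℝ) + 1) ≤ 2 * m := by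
    have : (K + 1) * (markerCount i m + 1) ≤ 2 * m := by linarith [hC m]
    exact_mod_cast this
  have hεK : 2 < ε * ((K : ℝ) + 1) := by
    rw [div_lt_iff₀ hε] at hK
    linarith
  rw [Real.dist_0_eq_abs, abs_of_nonneg (by positivity), div_lt_iff₀ hm0]
  nlinarith

end Growth

lemma tendsto_freqn_pre_sub_freqn_pre {α : Type*} [DecidableEq α] {S : ℕ → α}
    {S' : ℕ → Option α} {i : ℕ → ℕ} {w : List (Option α)} (hw : 0 < w.length)
    (hi0 : i 0 = 0) (hmono : StrictMono i)
    (hgap : ∀ j, i (j + 1) - i j ≤ i (j + 2) - i (j + 1))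
    (hunb : ∀ M : ℕ, ∃ j, M < i (j + 1) - i j)
    (hS' : ∀ j, pre S' (i j + j) = markPre S i j) :
    Tendsto (fun m => freqn w (pre S' m) -
      freqn w (pre (fun n => some (S n)) (m - markerCount i m))) atTop (𝓝 0) := by
  set l := w.length
  refine squeeze_zero_norm' ?_ (by simpa using
    (tendsto_markerCount_add_one_div hi0 hmono hgap hunb).const_mul (2 * (2 * (l : ℝ) + 1)))
  filter_upwards [eventually_ge_atTop (2 * l), eventually_gt_atTop 0] with m hm hm0
  have hJ := two_mul_markerCount_le hi0 hmono m
  have hocc : |(occ w (pre S' m) : ℝ) - occ w (pre (fun n => some (S n)) (m - markerCount i m))|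
      ≤ 2 * l * (markerCount i m + 1) := by
    exact_mod_cast abs_occ_pre_sub_le hw hi0 hmono hS' m
  rw [Real.norm_eq_abs]
  refine (abs_freqn_sub_freqn_le hw (by rw [length_pre]; omega)
    (by simp only [length_pre]; omega) hocc).trans ?_
  have hm2 : (2 * l : ℝ) ≤ m := by exact_mod_cast hm
  have hmpos : (0 : ℝ) < m := by exact_mod_cast hm0
  simp only [length_pre, Nat.cast_sub (show markerCount i m ≤ m by omega), sub_sub_cancel]
  calc _ ≤ (2 * l + 1) * ((markerCount i m : ℝ) + 1) / (m / 2) := by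
        apply div_le_div₀ (by positivity) (by nlinarith) (by positivity) (by linarith)
    _ = _ := by field_simp

theorem marker_insertion_entropy {α : Type*} [Fintype α] [DecidableEq α]
    (S : ℕ → α) (S' : ℕ → Option α) (i : ℕ → ℕ)
    (hi0 : i 0 = 0) (hmono : StrictMono i)
    (hgap : ∀ j, i (j + 1) - i j ≤ i (j + 2) - i (j + 1))
    (hunb : ∀ M : ℕ, ∃ j, M < i (j + 1) - i j)
    (hS' : ∀ j, pre S' (i j + j) = markPre S i j) :
    (∀ l : ℕ, 0 < l → Hl S' l = Hl (fun n => (some (S n) : Option α)) l) ∧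
      ∀ L : ℝ, Tendsto (fun l => Hl S' l) atTop (nhds L) ↔
        Tendsto (fun l => Hl (fun n => (some (S n) : Option α)) l) atTop (nhds L) := by
  have hHl (l : ℕ) (hl : 0 < l) : Hl S' l = Hl (fun n => (some (S n) : Option α)) l := by
    rw [Hl_eq_liminf_blockEntropySum, Hl_eq_liminf_blockEntropySum,
      liminf_blockEntropySum_eq_of_tendsto_sub hl (map_sub_markerCount_atTop hi0 hmono)
        fun v => tendsto_freqn_pre_sub_freqn_pre (by simpa using hl) hi0 hmono hgap hunb hS']
  exact ⟨hHl, fun L => tendsto_congr' (eventually_atTop.2 ⟨1, hHl⟩)⟩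
end
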